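/- arXiv:2102.06700 — 6 statements merged into one kernel-verified Lean document; each statement's English description precedes it below -/
import Mathlib

section
/- Define g : ℝ × ℝ × ℝ → ℝ by g(l, u, x) = 0 if u ≤ 0; g(l, u, x) = x if u > 0 and l ≥ 0; and g(l, u, x) = (u/(u−l))·(x − l) if l < 0 < u. Then g is continuous on the set D = {(l, u, x) ∈ ℝ³ : l ≤ x ≤ u} (i.e., ContinuousOn g D). -/
/-- The DeepZ upper-bound expression for a ReLU neuron with pre-activation
bounds `l ≤ x ≤ u`, as a function of `(l, u, x)`. -/
noncomputable def deepZUpper (p : ℝ × ℝ × ℝ) : ℝ :=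
  if p.2.1 ≤ 0 then 0
  else if 0 ≤ p.1 then p.2.2
  else (p.2.1 / (p.2.1 - p.1)) * (p.2.2 - p.1)

/-- A single-formula version of `deepZUpper` (using `0/0 = 0`). -/
noncomputable def deepZF (p : ℝ × ℝ × ℝ) : ℝ :=
  (max p.2.1 0 / (max p.2.1 0 - min p.1 0)) * (p.2.2 - min p.1 0)

lemma deepZUpper_eq_deepZF (p : ℝ × ℝ × ℝ) : deepZUpper p = deepZF p := by
  obtain ⟨l, u, x⟩ := p
  simp only [deepZUpper, deepZF]
  split_ifs with h1 h2
  · simp [max_eq_right h1]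
  · push_neg at h1
    rw [min_eq_right h2, max_eq_left h1.le, sub_zero, sub_zero, div_self h1.ne', one_mul]
  · push_neg at h1 h2
    rw [min_eq_left h2.le, max_eq_left h1.le]

lemma deepZF_nonneg {p : ℝ × ℝ × ℝ} (hp : p.1 ≤ p.2.2 ∧ p.2.2 ≤ p.2.1) :
    0 ≤ deepZF p := by
  obtain ⟨l, u, x⟩ := p
  obtain ⟨hlx, hxu⟩ := hp
  simp only [deepZF]
  rcases le_or_gt u 0 with h | h
  · simp [max_eq_right h]
  · have hd : 0 < u - min l 0 := by
      have : min l 0 ≤ 0 := min_le_right _ _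
      linarith
    rw [max_eq_left h.le]
    have hx : 0 ≤ x - min l 0 := by
      have : min l 0 ≤ l := min_le_left _ _
      linarith
    positivity

lemma deepZF_le {p : ℝ × ℝ × ℝ} (hp : p.1 ≤ p.2.2 ∧ p.2.2 ≤ p.2.1) :
    deepZF p ≤ max p.2.1 0 := by
  obtain ⟨l, u, x⟩ := p
  obtain ⟨hlx, hxu⟩ := hp
  simp only [deepZF]
  rcases le_or_gt u 0 with h | h
  · simp [max_eq_right h]
  · have hd : 0 < u - min l 0 := by
      have : min l 0 ≤ 0 := min_le_right _ _
      linarith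
    rw [max_eq_left h.le, div_mul_eq_mul_div, div_le_iff₀ hd]
    nlinarith [min_le_left l 0]

/-- The DeepZ ReLU upper bound is continuous on the admissible region
`D = {(l, u, x) : l ≤ x ≤ u}`. -/
theorem deepZUpper_continuousOn :
    ContinuousOn deepZUpper {p : ℝ × ℝ × ℝ | p.1 ≤ p.2.2 ∧ p.2.2 ≤ p.2.1} := by
  set D : Set (ℝ × ℝ × ℝ) := {p : ℝ × ℝ × ℝ | p.1 ≤ p.2.2 ∧ p.2.2 ≤ p.2.1} with hD
  have hF : ContinuousOn deepZF D := by
    intro p hp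
    by_cases h : max p.2.1 0 - min p.1 0 = 0
    · -- degenerate point: p = (0,0,0)
      have hmax : max p.2.1 0 = 0 := by
        have h1 : (0:ℝ) ≤ max p.2.1 0 := le_max_right _ _
        have h2 : min p.1 0 ≤ 0 := min_le_right _ _
        linarith
      have hmin : min p.1 0 = 0 := by linarith
      have hu : p.2.1 ≤ 0 := by
        by_contra hc
        push_neg at hc
        rw [max_eq_left hc.le] at hmax; linarith
      have hF0 : deepZF p = 0 := by
        simp [deepZF, hmax]
      rw [ContinuousWithinAt, hF0]
      have hub : Filter.Tendsto (fun q : ℝ × ℝ × ℝ => max q.2.1 0)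
          (nhdsWithin p D) (nhds 0) := by
        have : Filter.Tendsto (fun q : ℝ × ℝ × ℝ => max q.2.1 0)
            (nhds p) (nhds (max p.2.1 0)) :=
          (Continuous.max (continuous_fst.comp continuous_snd) continuous_const).tendsto p
        rw [hmax] at this
        exact this.mono_left nhdsWithin_le_nhds
      refine tendsto_of_tendsto_of_tendsto_of_le_of_le' tendsto_const_nhds hub ?_ ?_
      · filter_upwards [self_mem_nhdsWithin] with q hq
        exact deepZF_nonneg hq
      · filter_upwards [self_mem_nhdsWithin] with q hq
        exact deepZF_le hq
    · -- denominator nonzero: deepZF is continuous at p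
      apply ContinuousAt.continuousWithinAt
      apply ContinuousAt.mul
      · apply ContinuousAt.div
        · exact (Continuous.max (continuous_fst.comp continuous_snd) continuous_const).continuousAt
        · exact ((Continuous.max (continuous_fst.comp continuous_snd) continuous_const).sub
            (Continuous.min continuous_fst continuous_const)).continuousAt
        · exact h
      · exact ((continuous_snd.comp continuous_snd).sub
          (Continuous.min continuous_fst continuous_const)).continuousAt
  exact hF.congr fun q _ => deepZUpper_eq_deepZF q
end

section
/- Define h : ℝ × ℝ × ℝ → ℝ by h(l, u, x) = 0 if u ≤ 0; h(l, u, x) = x if u > 0 and l ≥ 0; and h(l, u, x) = (u/(u−l))·x if l < 0 < u. Then h is continuous on the set D = {(l, u, x) ∈ ℝ³ : l ≤ x ≤ u} (i.e., ContinuousOn h D). -/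
/-- The DeepZ lower-bound expression for a ReLU neuron with pre-activation
bounds `l ≤ x ≤ u`, as a function of `(l, u, x)`. -/
noncomputable def deepZLower (p : ℝ × ℝ × ℝ) : ℝ :=
  if p.2.1 ≤ 0 then 0
  else if 0 ≤ p.1 then p.2.2
  else (p.2.1 / (p.2.1 - p.1)) * p.2.2

/-- Auxiliary continuous representative. -/
noncomputable def deepZAux (p : ℝ × ℝ × ℝ) : ℝ :=
  max p.2.1 0 * p.2.2 / (max p.2.1 0 - min p.1 0)

lemma deepZAux_abs_le (q : ℝ × ℝ × ℝ) : |deepZAux q| ≤ |q.2.2| := by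
  unfold deepZAux
  set a := max q.2.1 0 with ha
  set b := min q.1 0 with hb
  have ha0 : 0 ≤ a := le_max_right _ _
  have hb0 : b ≤ 0 := min_le_right _ _
  have hd0 : 0 ≤ a - b := by linarith
  rcases eq_or_lt_of_le hd0 with h | h
  · rw [← h, div_zero, abs_zero]; exact abs_nonneg _
  · rw [abs_div, abs_mul, abs_of_nonneg ha0, abs_of_nonneg hd0]
    rw [div_le_iff₀ h]
    have : a ≤ a - b := by linarith
    calc a * |q.2.2| ≤ (a - b) * |q.2.2| :=
          mul_le_mul_of_nonneg_right this (abs_nonneg _)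
      _ = |q.2.2| * (a - b) := mul_comm _ _

lemma deepZAux_continuousOn :
    ContinuousOn deepZAux {p : ℝ × ℝ × ℝ | p.1 ≤ p.2.2 ∧ p.2.2 ≤ p.2.1} := by
  intro p hp
  by_cases hd : max p.2.1 0 - min p.1 0 = 0
  · -- singular point: here u ≤ 0 ≤ l, so x = 0
    have ha0 : 0 ≤ max p.2.1 0 := le_max_right _ _
    have hb0 : min p.1 0 ≤ 0 := min_le_right _ _
    have ha : max p.2.1 0 = 0 := by linarith
    have hb : min p.1 0 = 0 := by linarith
    have hu : p.2.1 ≤ 0 := by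
      by_contra h
      push_neg at h
      rw [max_eq_left h.le] at ha; linarith
    have hl : 0 ≤ p.1 := by
      by_contra h
      push_neg at h
      rw [min_eq_left h.le] at hb; linarith
    have hx : p.2.2 = 0 := le_antisymm (hp.2.trans hu) (hl.trans hp.1)
    have hfp : deepZAux p = 0 := by unfold deepZAux; rw [hd, div_zero]
    rw [ContinuousWithinAt, hfp]
    apply squeeze_zero_norm (fun q => deepZAux_abs_le q)
    have : Filter.Tendsto (fun q : ℝ × ℝ × ℝ => |q.2.2|) (nhds p) (nhds |p.2.2|) :=
      (continuous_abs.comp (continuous_snd.comp continuous_snd)).tendsto p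
    rw [hx, abs_zero] at this
    exact this.mono_left nhdsWithin_le_nhds
  · -- denominator nonzero: continuity at p
    apply ContinuousAt.continuousWithinAt
    apply ContinuousAt.div
    · exact (((continuous_fst.comp continuous_snd).max continuous_const).mul
        (continuous_snd.comp continuous_snd)).continuousAt
    · exact (((continuous_fst.comp continuous_snd).max continuous_const).sub
        (continuous_fst.min continuous_const)).continuousAt
    · exact hd

/-- The DeepZ ReLU lower bound is continuous on the admissible region
`D = {(l, u, x) : l ≤ x ≤ u}`. -/
theorem deepZLower_continuousOn :
    ContinuousOn deepZLower {p : ℝ × ℝ × ℝ | p.1 ≤ p.2.2 ∧ p.2.2 ≤ p.2.1} := by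
  apply deepZAux_continuousOn.congr
  intro p _
  unfold deepZLower deepZAux
  split_ifs with h1 h2
  · rw [max_eq_right h1, zero_mul, zero_div]
  · push_neg at h1
    rw [max_eq_left h1.le, min_eq_right h2]
    rw [sub_zero, mul_div_cancel_left₀ _ (ne_of_gt h1)]
  · push_neg at h1 h2
    rw [max_eq_left h1.le, min_eq_left h2.le, div_mul_eq_mul_div]
end

section
/- Let l, u, x ∈ ℝ with l < 0 < u and l ≤ x ≤ u, and set λ = u/(u−l). Then λ·x ≤ ReLU(x) ≤ λ·(x − l). -/
/-- ReLU activation. -/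
noncomputable def ReLU (x : ℝ) : ℝ := max x 0

/-- Soundness of the DeepZ relaxation for an unstable ReLU neuron: with
`l < 0 < u`, `l ≤ x ≤ u`, and `λ = u / (u − l)`, we have
`λ·x ≤ ReLU(x) ≤ λ·(x − l)`. -/
theorem deepZ_relu_sound (l u x : ℝ) (hl : l < 0) (hu : 0 < u)
    (hlx : l ≤ x) (hxu : x ≤ u) :
    (u / (u - l)) * x ≤ ReLU x ∧ ReLU x ≤ (u / (u - l)) * (x - l) := by
  have hd : (0:ℝ) < u - l := by linarith
  have hlam0 : 0 ≤ u / (u - l) := div_nonneg hu.le hd.le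
  have hlam1 : u / (u - l) ≤ 1 := by rw [div_le_one hd]; linarith
  rcases le_or_gt x 0 with hx | hx
  · rw [ReLU, max_eq_right hx]
    exact ⟨mul_nonpos_of_nonneg_of_nonpos hlam0 hx,
      mul_nonneg hlam0 (by linarith)⟩
  · rw [ReLU, max_eq_left hx.le]
    constructor
    · calc u / (u - l) * x ≤ 1 * x := by nlinarith
        _ = x := one_mul x
    · rw [div_mul_eq_mul_div, le_div_iff₀ hd]
      nlinarith
end

section
/- Define f : ℝ → ℝ by f(w) = 1 if w ≤ 0 and f(w) = w if w > 0. Then: (i) for every w ∈ [−1, 1] and every x₀ ∈ [−1, 1], f(w) ≤ ReLU(x₀ + w) + 1; and (ii) f is not continuous at w = 0. -/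
open Filter Topology

theorem ReLU_nonneg (x : ℝ) : 0 ≤ ReLU x := le_max_right x 0

theorem ite_le_ReLU_add_one {w : ℝ} (hw : w ≤ 1) (x : ℝ) :
    (if w ≤ 0 then (1 : ℝ) else w) ≤ ReLU (x + w) + 1 := by
  have := ReLU_nonneg (x + w)
  split_ifs <;> linarith

/-- The right limit at `a` is `a`, while the value at `a` is `c`. -/
theorem not_continuousAt_ite_le {a c : ℝ} (hca : c ≠ a) :
    ¬ ContinuousAt (fun w : ℝ => if w ≤ a then c else w) a := by
  intro hf
  have h_value : Tendsto (fun w : ℝ => if w ≤ a then c else w) (𝓝[>] a) (𝓝 c) := by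
    simpa using hf.tendsto.mono_left nhdsWithin_le_nhds
  have h_right : Tendsto (fun w : ℝ => if w ≤ a then c else w) (𝓝[>] a) (𝓝 a) := by
    refine (tendsto_id.mono_left nhdsWithin_le_nhds).congr' ?_
    filter_upwards [self_mem_nhdsWithin] with w hw
    exact (if_neg (not_le.mpr hw)).symm
  exact hca (tendsto_nhds_unique h_value h_right)

/-- Minimal example of CROWN's discontinuity: the CROWN lower bound
`f(w) = 1` for `w ≤ 0` and `f(w) = w` for `w > 0` of the output neuron
`x₃,₁ = ReLU(x₀ + w) + 1` is (i) a valid lower bound on the true output for all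
`w, x₀ ∈ [−1, 1]`, and (ii) not continuous at `w = 0`. -/
theorem crown_example_discontinuous :
    (∀ w ∈ Set.Icc (-1 : ℝ) 1, ∀ x₀ ∈ Set.Icc (-1 : ℝ) 1,
      (if w ≤ 0 then (1 : ℝ) else w) ≤ ReLU (x₀ + w) + 1) ∧
    ¬ ContinuousAt (fun w : ℝ => if w ≤ 0 then (1 : ℝ) else w) 0 :=
  ⟨fun _ hw x₀ _ => ite_le_ReLU_add_one hw.2 x₀, not_continuousAt_ite_le one_ne_zero⟩
end

section
/- Define p : ℝ × ℝ × ℝ → ℝ by p(l, u, x) = 0 if u ≤ 0; p(l, u, x) = x if u > 0 and l ≥ 0; and p(l, u, x) = min(u, x − l) if l < 0 < u. Then p is continuous on the set D = {(l, u, x) ∈ ℝ³ : l ≤ x ≤ u} (i.e., ContinuousOn p D). -/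
/-- The Parallelogram upper-bound expression for a ReLU neuron with
pre-activation bounds `l ≤ x ≤ u`, as a function of `(l, u, x)`. -/
noncomputable def parUpper (p : ℝ × ℝ × ℝ) : ℝ :=
  if p.2.1 ≤ 0 then 0
  else if 0 ≤ p.1 then p.2.2
  else min p.2.1 (p.2.2 - p.1)

/-- The Parallelogram ReLU upper bound is continuous on the admissible region
`D = {(l, u, x) : l ≤ x ≤ u}`. -/
theorem parUpper_continuousOn :
    ContinuousOn parUpper {p : ℝ × ℝ × ℝ | p.1 ≤ p.2.2 ∧ p.2.2 ≤ p.2.1} := by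
  have hf : Continuous fun p : ℝ × ℝ × ℝ => max 0 (min p.2.1 (p.2.2 - min p.1 0)) := by
    fun_prop
  apply hf.continuousOn.congr
  rintro ⟨l, u, x⟩ ⟨h1, h2⟩
  simp only [parUpper]
  dsimp only at h1 h2 ⊢
  split_ifs with hu hl
  · -- u ≤ 0
    have hx : 0 ≤ x - min l 0 := by
      rcases le_or_gt l 0 with h | h
      · simp [min_eq_left h]; linarith
      · simp [min_eq_right h.le]; linarith
    rw [min_eq_left (le_trans hu hx), max_eq_left hu]
  · -- u > 0, l ≥ 0
    push_neg at hu
    rw [min_eq_right hl, sub_zero, min_eq_right h2, max_eq_right (le_trans hl h1)]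
  · -- l < 0 < u
    push_neg at hu hl
    rw [min_eq_left hl.le]
    rw [max_eq_right (le_min hu.le (by linarith))]
end

section
/- Let l, u ∈ ℝ with l < 0 < u. Define T = {(x, y) ∈ ℝ² : l ≤ x ≤ u ∧ 0 ≤ y ∧ x ≤ y ∧ (u − l)·y ≤ u·(x − l)}, P = {(x, y) ∈ ℝ² : l ≤ x ≤ u ∧ 0 ≤ y ∧ x ≤ y ∧ y ≤ u ∧ y ≤ x − l}, and B = {(x, y) ∈ ℝ² : l ≤ x ≤ u ∧ 0 ≤ y ∧ y ≤ u}. Then T ⊆ P and P ⊆ B. -/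
/-- For an unstable ReLU neuron (`l < 0 < u`), the Triangle constraint set is
contained in the Parallelogram constraint set, which in turn is contained in
the Box/hBox unstable constraint set. -/
theorem triangle_subset_parallelogram_subset_box (l u : ℝ) (hl : l < 0) (hu : 0 < u) :
    ({p : ℝ × ℝ | l ≤ p.1 ∧ p.1 ≤ u ∧ 0 ≤ p.2 ∧ p.1 ≤ p.2 ∧
        (u - l) * p.2 ≤ u * (p.1 - l)} ⊆
      {p : ℝ × ℝ | l ≤ p.1 ∧ p.1 ≤ u ∧ 0 ≤ p.2 ∧ p.1 ≤ p.2 ∧ p.2 ≤ u ∧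
        p.2 ≤ p.1 - l}) ∧
    ({p : ℝ × ℝ | l ≤ p.1 ∧ p.1 ≤ u ∧ 0 ≤ p.2 ∧ p.1 ≤ p.2 ∧ p.2 ≤ u ∧
        p.2 ≤ p.1 - l} ⊆
      {p : ℝ × ℝ | l ≤ p.1 ∧ p.1 ≤ u ∧ 0 ≤ p.2 ∧ p.2 ≤ u}) := by
  constructor
  · rintro ⟨x, y⟩ ⟨h1, h2, h3, h4, h5⟩
    refine ⟨h1, h2, h3, h4, ?_, ?_⟩
    · nlinarith
    · nlinarith
  · rintro ⟨x, y⟩ ⟨h1, h2, h3, _, h5, _⟩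
    exact ⟨h1, h2, h3, h5⟩
end
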